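/- The restriction of φ_k to {(p,q) ∈ ℝ² : q ≠ 0} induces a diffeomorphism from (ℝ×ℝ*)/ℤ onto A_{2k} \ {0}, where φ_k(p,q) = (q^k cos(2πp/q), q^k sin(2πp/q), q). -/

import Mathlib

/-!
Identify the first two coordinates with `ℂ`. Then `φ_k(p, q) = (q^k e^{iθ}, q)` with
`θ = 2πp/q`, and two points of `ℝ × ℝ*` have the same image exactly when their angles
differ by a multiple of `2π`, i.e. when they lie in the same `ℤ`-orbit. A point
`w = (x, y, z)` of `A_{2k} \ {0}` has `z ≠ 0` and `(x + iy)/z^k` on the unit circle, so a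
branch of the argument recovers a preimage of `w`. Each branch is smooth on an open set
of `ℝ³`, giving the smooth local inverses, and any two branches differ by the `ℤ`-action,
so the inverse map to the quotient is continuous.
-/

open Real

/-- The map `φ_k(p,q) = (q^k cos(2πp/q), q^k sin(2πp/q), q)`. -/
noncomputable def phiMap (k : ℕ) (v : ℝ × ℝ) : ℝ × ℝ × ℝ :=
  (v.2 ^ k * Real.cos (2 * π * v.1 / v.2),
   v.2 ^ k * Real.sin (2 * π * v.1 / v.2), v.2)

/-- The `ℤ`-action relation on `ℝ × ℝ*`: `(p,q) ∼ (p + nq, q)`. -/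
def zRel (a b : {v : ℝ × ℝ // v.2 ≠ 0}) : Prop :=
  ∃ n : ℤ, b.val.1 = a.val.1 + n * a.val.2 ∧ b.val.2 = a.val.2

open Complex (I arg slitPlane)
open scoped Complex Topology

@[fun_prop]
lemma Complex.contDiff_ofReal {n : WithTop ℕ∞} : ContDiff ℝ n ((↑) : ℝ → ℂ) :=
  Complex.ofRealCLM.contDiff

lemma Complex.contDiffAt_arg {z : ℂ} (h : z ∈ slitPlane) {n : WithTop ℕ∞} :
    ContDiffAt ℝ n arg z := by
  have : ContDiffAt ℝ n (fun z => (Complex.log z).im) z :=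
    Complex.imCLM.contDiff.contDiffAt.comp z ((Complex.contDiffAt_log h).restrict_scalars ℝ)
  exact this.congr_of_eventuallyEq (.of_forall fun z => (Complex.log_im z).symm)

lemma Complex.arg_exp_mul_I_of_mem_Ioc {θ : ℝ} (h : θ ∈ Set.Ioc (-π) π) :
    arg (cexp (θ * I)) = θ := by
  rw [Complex.arg_exp_mul_I, toIocMod_eq_self]
  exact ⟨h.1, by linarith [h.2]⟩

lemma Complex.exp_mul_I_mem_slitPlane {θ : ℝ} (h : θ ∈ Set.Ioo (-π) π) :
    cexp (θ * I) ∈ slitPlane := by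
  rw [Complex.mem_slitPlane_iff_arg,
    Complex.arg_exp_mul_I_of_mem_Ioc (Set.Ioo_subset_Ioc_self h)]
  exact ⟨h.2.ne, Complex.exp_ne_zero _⟩

noncomputable def phiAngle (v : ℝ × ℝ) : ℝ := 2 * π * v.1 / v.2

lemma phiMap_eq (k : ℕ) (v : ℝ × ℝ) :
    phiMap k v = (v.2 ^ k * Real.cos (phiAngle v), v.2 ^ k * Real.sin (phiAngle v), v.2) :=
  rfl

lemma phiAngle_add_int_mul {q : ℝ} (hq : q ≠ 0) (p : ℝ) (n : ℤ) :
    phiAngle (p + n * q, q) = phiAngle (p, q) + n * (2 * π) := by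
  simp only [phiAngle]
  field_simp

lemma phiMap_add_int_mul {q : ℝ} (hq : q ≠ 0) (k : ℕ) (p : ℝ) (n : ℤ) :
    phiMap k (p + n * q, q) = phiMap k (p, q) := by
  simp only [phiMap_eq, phiAngle_add_int_mul hq, Real.cos_add_int_mul_two_pi,
    Real.sin_add_int_mul_two_pi]

noncomputable def unitPart (k : ℕ) (w : ℝ × ℝ × ℝ) : ℂ :=
  (w.1 + w.2.1 * I) / (w.2.2 : ℂ) ^ k

lemma unitPart_phiMap (k : ℕ) {v : ℝ × ℝ} (hv : v.2 ≠ 0) :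
    unitPart k (phiMap k v) = cexp (phiAngle v * I) := by
  rw [unitPart, div_eq_iff (pow_ne_zero _ (by exact_mod_cast hv)), Complex.exp_mul_I,
    ← Complex.ofReal_cos, ← Complex.ofReal_sin, phiMap_eq]
  push_cast
  ring

lemma norm_unitPart {k : ℕ} {w : ℝ × ℝ × ℝ} (hz : w.2.2 ≠ 0)
    (hw : w.1 ^ 2 + w.2.1 ^ 2 = w.2.2 ^ (2 * k)) : ‖unitPart k w‖ = 1 := by
  have hsq : ‖unitPart k w‖ ^ 2 = 1 := by
    rw [Complex.sq_norm, unitPart, Complex.normSq_div, Complex.normSq_add_mul_I, map_pow,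
      Complex.normSq_ofReal, hw, pow_mul', sq, ← mul_pow,
      div_self (pow_ne_zero _ (mul_ne_zero hz hz))]
  exact (pow_eq_one_iff_of_nonneg (norm_nonneg _) two_ne_zero).1 hsq

lemma phiMap_of_unitPart_eq_exp {k : ℕ} {w : ℝ × ℝ × ℝ} {α : ℝ} (hz : w.2.2 ≠ 0)
    (h : unitPart k w = cexp (α * I)) : phiMap k (w.2.2 * α / (2 * π), w.2.2) = w := by
  rw [unitPart, div_eq_iff (pow_ne_zero _ (by exact_mod_cast hz)), ← Complex.ofReal_pow] at h
  have hα : phiAngle (w.2.2 * α / (2 * π), w.2.2) = α := by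
    simp only [phiAngle]
    field_simp
  rw [phiMap_eq, hα]
  ext
  · have hre := congrArg Complex.re h
    simp only [Complex.add_re, Complex.ofReal_re, Complex.re_ofReal_mul, Complex.I_re,
      mul_zero, add_zero, Complex.re_mul_ofReal, Complex.exp_ofReal_mul_I_re] at hre
    linarith
  · have him := congrArg Complex.im h
    simp only [Complex.add_im, Complex.ofReal_im, Complex.im_ofReal_mul, Complex.I_im,
      mul_one, zero_add, Complex.im_mul_ofReal, Complex.exp_ofReal_mul_I_im] at him
    linarith
  · rfl

/-- The branch of `φ_k⁻¹` that takes the angle `2πp/q` in `(θ - π, θ + π]`. -/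
noncomputable def liftAt (k : ℕ) (θ : ℝ) (w : ℝ × ℝ × ℝ) : ℝ × ℝ :=
  (w.2.2 * (arg (unitPart k w * cexp (-θ * I)) + θ) / (2 * π), w.2.2)

def liftDomain (k : ℕ) (θ : ℝ) : Set (ℝ × ℝ × ℝ) :=
  {w | w.2.2 ≠ 0 ∧ unitPart k w * cexp (-θ * I) ∈ slitPlane}

lemma phiMap_liftAt {k : ℕ} (θ : ℝ) {w : ℝ × ℝ × ℝ} (hz : w.2.2 ≠ 0)
    (hw : w.1 ^ 2 + w.2.1 ^ 2 = w.2.2 ^ (2 * k)) : phiMap k (liftAt k θ w) = w := by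
  set u := unitPart k w * cexp (-θ * I)
  have hu : cexp (arg u * I) = u := by
    have : ‖u‖ = 1 := by
      rw [norm_mul, norm_unitPart hz hw, ← Complex.ofReal_neg, Complex.norm_exp_ofReal_mul_I,
        one_mul]
    simpa [this] using Complex.norm_mul_exp_arg_mul_I u
  refine phiMap_of_unitPart_eq_exp hz ?_
  calc unitPart k w = u * cexp (θ * I) := by
        rw [mul_assoc, ← Complex.exp_add]; simp
    _ = cexp (↑(arg u + θ) * I) := by
        rw [Complex.ofReal_add, add_mul, Complex.exp_add, hu]

lemma unitPart_phiMap_mul_exp (k : ℕ) {v : ℝ × ℝ} (hv : v.2 ≠ 0) (θ : ℝ) :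
    unitPart k (phiMap k v) * cexp (-θ * I) = cexp ((phiAngle v - θ : ℝ) * I) := by
  rw [unitPart_phiMap k hv, ← Complex.exp_add]
  push_cast
  ring_nf

lemma liftAt_phiMap (k : ℕ) {θ : ℝ} {v : ℝ × ℝ} (hv : v.2 ≠ 0)
    (h : phiAngle v - θ ∈ Set.Ioo (-π) π) : liftAt k θ (phiMap k v) = v := by
  rw [liftAt, unitPart_phiMap_mul_exp k hv,
    Complex.arg_exp_mul_I_of_mem_Ioc (Set.Ioo_subset_Ioc_self h)]
  ext
  · simp only [phiMap_eq, sub_add_cancel, phiAngle]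
    field_simp
  · rfl

lemma phiMap_mem_liftDomain (k : ℕ) {θ : ℝ} {v : ℝ × ℝ} (hv : v.2 ≠ 0)
    (h : phiAngle v - θ ∈ Set.Ioo (-π) π) : phiMap k v ∈ liftDomain k θ := by
  refine ⟨hv, ?_⟩
  rw [unitPart_phiMap_mul_exp k hv]
  exact Complex.exp_mul_I_mem_slitPlane h

lemma contDiffAt_unitPart_mul_exp (k : ℕ) (θ : ℝ) {w : ℝ × ℝ × ℝ} (hz : w.2.2 ≠ 0)
    {n : WithTop ℕ∞} : ContDiffAt ℝ n (fun w => unitPart k w * cexp (-θ * I)) w := by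
  simp only [unitPart, div_eq_mul_inv]
  fun_prop (disch := exact pow_ne_zero _ (Complex.ofReal_ne_zero.2 hz))

lemma isOpen_liftDomain (k : ℕ) (θ : ℝ) : IsOpen (liftDomain k θ) :=
  ContinuousOn.isOpen_inter_preimage
    (fun _ hz => (contDiffAt_unitPart_mul_exp (n := 0) k θ hz).continuousAt.continuousWithinAt)
    (isOpen_ne_fun (by fun_prop) continuous_const) Complex.isOpen_slitPlane

lemma contDiffOn_liftAt (k : ℕ) (θ : ℝ) {n : WithTop ℕ∞} :
    ContDiffOn ℝ n (liftAt k θ) (liftDomain k θ) := by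
  rintro w ⟨hz, hslit⟩
  refine ContDiffAt.contDiffWithinAt ?_
  have harg :=
    (Complex.contDiffAt_arg (n := n) hslit).comp w (contDiffAt_unitPart_mul_exp k θ hz)
  unfold liftAt
  fun_prop

lemma contDiffOn_phiMap (k : ℕ) {n : WithTop ℕ∞} :
    ContDiffOn ℝ n (phiMap k) {v : ℝ × ℝ | v.2 ≠ 0} := by
  intro v hv
  refine ContDiffAt.contDiffWithinAt ?_
  unfold phiMap
  fun_prop (disch := exact hv)

lemma exists_local_inverse_phiMap (k : ℕ) {a : ℝ × ℝ} (ha : a.2 ≠ 0) :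
    ∃ (U : Set (ℝ × ℝ)) (V : Set (ℝ × ℝ × ℝ)) (ψ : ℝ × ℝ × ℝ → ℝ × ℝ),
      IsOpen U ∧ a ∈ U ∧ IsOpen V ∧ phiMap k a ∈ V ∧
      ContDiffOn ℝ (⊤ : ℕ∞) ψ V ∧
      ∀ b ∈ U, phiMap k b ∈ V ∧ ψ (phiMap k b) = b := by
  set U := {v : ℝ × ℝ | v.2 ≠ 0} ∩ phiAngle ⁻¹' Set.Ioo (phiAngle a - π) (phiAngle a + π)
  have hU : ∀ b ∈ U, phiAngle b - phiAngle a ∈ Set.Ioo (-π) π := fun b hb =>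
    ⟨by linarith [hb.2.1], by linarith [hb.2.2]⟩
  refine ⟨U, liftDomain k (phiAngle a), liftAt k (phiAngle a), ?_, ?_, isOpen_liftDomain k _,
    phiMap_mem_liftDomain k ha (by simp [pi_pos]), contDiffOn_liftAt k _,
    fun b hb => ⟨phiMap_mem_liftDomain k hb.1 (hU b hb), liftAt_phiMap k hb.1 (hU b hb)⟩⟩
  · have hcont : ContinuousOn phiAngle {v : ℝ × ℝ | v.2 ≠ 0} :=
      ContinuousOn.div (by fun_prop) (by fun_prop) fun _ hv => hv
    exact hcont.isOpen_inter_preimage (isOpen_ne_fun (by fun_prop) continuous_const) isOpen_Ioo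
  · exact ⟨ha, by linarith [pi_pos], by linarith [pi_pos]⟩

lemma phiMap_eq_phiMap_iff (k : ℕ) (a b : {v : ℝ × ℝ // v.2 ≠ 0}) :
    phiMap k a.1 = phiMap k b.1 ↔ zRel a b := by
  obtain ⟨⟨p, q⟩, hq⟩ := a
  obtain ⟨⟨p', q'⟩, hq'⟩ := b
  refine ⟨fun h => ?_, ?_⟩
  · obtain rfl : q = q' := congrArg (·.2.2) h
    have hexp : cexp (phiAngle (p', q) * I) = cexp (phiAngle (p, q) * I) := by
      rw [← unitPart_phiMap k hq, ← unitPart_phiMap k hq', h]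
    obtain ⟨n, hn⟩ := Complex.exp_eq_exp_iff_exists_int.1 hexp
    have hangle : phiAngle (p', q) = phiAngle (p + n * q, q) := by
      rw [phiAngle_add_int_mul hq]
      simpa using congrArg Complex.im hn
    refine ⟨n, ?_, rfl⟩
    simp only [phiAngle] at hangle
    field_simp at hangle
    simpa [mul_comm] using hangle
  · rintro ⟨n, h₁, h₂⟩
    simp only at h₁ h₂
    subst h₁ h₂
    exact (phiMap_add_int_mul hq k p n).symm

abbrev PuncturedSurface (k : ℕ) : Type :=
  {w : ℝ × ℝ × ℝ // w.1 ^ 2 + w.2.1 ^ 2 = w.2.2 ^ (2 * k) ∧ w ≠ 0}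

lemma PuncturedSurface.snd_snd_ne_zero {k : ℕ} (hk : k ≠ 0) (w : PuncturedSurface k) :
    w.1.2.2 ≠ 0 := by
  obtain ⟨⟨x, y, z⟩, hw, hne⟩ := w
  rintro rfl
  rw [zero_pow (by omega)] at hw
  have hx : x = 0 := by nlinarith [sq_nonneg x, sq_nonneg y]
  have hy : y = 0 := by nlinarith [sq_nonneg x, sq_nonneg y]
  exact hne (by simp [hx, hy])

lemma phiMap_mem_puncturedSurface (k : ℕ) {v : ℝ × ℝ} (hv : v.2 ≠ 0) :
    (phiMap k v).1 ^ 2 + (phiMap k v).2.1 ^ 2 = (phiMap k v).2.2 ^ (2 * k) ∧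
      phiMap k v ≠ 0 := by
  refine ⟨?_, fun h => hv (congrArg (·.2.2) h)⟩
  simp only [phiMap_eq]
  rw [mul_pow, mul_pow, ← mul_add, Real.cos_sq_add_sin_sq, mul_one, ← pow_mul, mul_comm]

noncomputable def quotToSurface (k : ℕ) : Quot zRel → PuncturedSurface k :=
  Quot.lift (fun v => ⟨phiMap k v.1, phiMap_mem_puncturedSurface k v.2⟩)
    fun a b h => Subtype.ext ((phiMap_eq_phiMap_iff k a b).2 h)

noncomputable def surfaceToQuot {k : ℕ} (hk : k ≠ 0) : PuncturedSurface k → Quot zRel :=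
  fun w => Quot.mk _ ⟨liftAt k 0 w.1, w.snd_snd_ne_zero hk⟩

lemma quotToSurface_surfaceToQuot {k : ℕ} (hk : k ≠ 0) (w : PuncturedSurface k) :
    quotToSurface k (surfaceToQuot hk w) = w :=
  Subtype.ext (phiMap_liftAt 0 (w.snd_snd_ne_zero hk) w.2.1)

lemma surfaceToQuot_quotToSurface {k : ℕ} (hk : k ≠ 0) (x : Quot zRel) :
    surfaceToQuot hk (quotToSurface k x) = x := by
  induction x using Quot.ind with
  | mk a =>
    exact Quot.sound ((phiMap_eq_phiMap_iff k _ a).1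
      (phiMap_liftAt 0 a.2 (phiMap_mem_puncturedSurface k a.2).1))

lemma continuous_quotToSurface (k : ℕ) : Continuous (quotToSurface k) :=
  continuous_quot_lift _ (((contDiffOn_phiMap k (n := 0)).continuousOn.comp_continuous
    continuous_subtype_val Subtype.prop).subtype_mk _)

lemma surfaceToQuot_eq_mk_liftAt {k : ℕ} (hk : k ≠ 0) (θ : ℝ) (w : PuncturedSurface k) :
    surfaceToQuot hk w = Quot.mk zRel ⟨liftAt k θ w.1, w.snd_snd_ne_zero hk⟩ :=
  Quot.sound <| (phiMap_eq_phiMap_iff k _ _).1 <|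
    (phiMap_liftAt 0 (w.snd_snd_ne_zero hk) w.2.1).trans
      (phiMap_liftAt θ (w.snd_snd_ne_zero hk) w.2.1).symm

lemma continuous_surfaceToQuot {k : ℕ} (hk : k ≠ 0) : Continuous (surfaceToQuot hk) := by
  refine continuous_iff_continuousAt.2 fun w₀ => ?_
  -- near `w₀`, use the branch centred at the angle of a lift `a` of `w₀`
  set a := liftAt k 0 w₀.1
  have ha : a.2 ≠ 0 := w₀.snd_snd_ne_zero hk
  have hV : liftDomain k (phiAngle a) ∈ 𝓝 w₀.1 := by
    refine (isOpen_liftDomain k _).mem_nhds ?_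
    have hw₀ : phiMap k a = w₀.1 := phiMap_liftAt 0 ha w₀.2.1
    rw [← hw₀]
    exact phiMap_mem_liftDomain k ha (by simp [pi_pos])
  have hlift : ContinuousAt (fun w : PuncturedSurface k => liftAt k (phiAngle a) w.1) w₀ :=
    ((contDiffOn_liftAt k _ (n := 0)).continuousOn.continuousAt hV).comp
      continuous_subtype_val.continuousAt
  rw [funext (surfaceToQuot_eq_mk_liftAt hk (phiAngle a))]
  exact continuous_quot_mk.continuousAt.comp
    (Topology.IsInducing.subtypeVal.continuousAt_iff.2 hlift)

noncomputable def quotHomeomorphSurface {k : ℕ} (hk : k ≠ 0) :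
    Quot zRel ≃ₜ PuncturedSurface k where
  toFun := quotToSurface k
  invFun := surfaceToQuot hk
  left_inv := surfaceToQuot_quotToSurface hk
  right_inv := quotToSurface_surfaceToQuot hk
  continuous_toFun := continuous_quotToSurface k
  continuous_invFun := continuous_surfaceToQuot hk

/-- `φ_k` induces a diffeomorphism `(ℝ × ℝ*)/ℤ ≃ A_{2k} \ {0}`: it descends to
a homeomorphism of the quotient onto `A_{2k} \ {0}`, is smooth on `{q ≠ 0}`,
and around every point admits a smooth local inverse defined on an open set of
`ℝ³` (so it is a local diffeomorphism onto the surface). -/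
theorem stmt11 (k : ℕ) (hk : 2 ≤ k) :
    ∃ e : Quot zRel ≃ₜ
        {w : ℝ × ℝ × ℝ // w.1 ^ 2 + w.2.1 ^ 2 = w.2.2 ^ (2 * k) ∧ w ≠ 0},
      (∀ a : {v : ℝ × ℝ // v.2 ≠ 0}, (e (Quot.mk zRel a)).val = phiMap k a.val) ∧
      ContDiffOn ℝ (⊤ : ℕ∞) (phiMap k) {v : ℝ × ℝ | v.2 ≠ 0} ∧
      ∀ a : ℝ × ℝ, a.2 ≠ 0 →
        ∃ (U : Set (ℝ × ℝ)) (V : Set (ℝ × ℝ × ℝ)) (ψ : ℝ × ℝ × ℝ → ℝ × ℝ),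
          IsOpen U ∧ a ∈ U ∧ IsOpen V ∧ phiMap k a ∈ V ∧
          ContDiffOn ℝ (⊤ : ℕ∞) ψ V ∧
          ∀ b ∈ U, phiMap k b ∈ V ∧ ψ (phiMap k b) = b :=
  ⟨quotHomeomorphSurface (by omega), fun _ => rfl, contDiffOn_phiMap k,
    fun _ ha => exists_local_inverse_phiMap k ha⟩
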